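/- Let v_1,…,v_m be monomials in K[x_2,…,x_n] (not involving x_1), let a be a positive integer, and set I = (x_1^a v_1, v_2,…,v_m) and I' = (x_1^{a+1} v_1, v_2,…,v_m). Let g ∈ ℕ^n with x^g = lcm(x_1^a v_1, v_2,…,v_m) (so g(1) = a) and g' = g + e_1. Suppose P_{I'}^{g'} = ⋃_{i=1}^r [c'_i, d'_i] is a partition of P_{I'}^{g'} into pairwise disjoint intervals. Define c_i = c'_i if c'_i(1) ≤ a and c_i = c'_i − e_1 if c'_i(1) = a+1, and define d_i = d'_i if d'_i(1) < a and d_i = d'_i − e_1 if d'_i(1) ≥ a. Then the nonempty intervals among [c_1,d_1],…,[c_r,d_r] form a partition of P_I^g into pairwise disjoint intervals, and ρ_g(d_i) = ρ_{g'}(d'_i) for all i ∈ [r]. -/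

import Mathlib

/-
Sending `σ` with `σ(1) ≤ a` to `σ + e₁` if `σ(1) = a` and to `σ` otherwise identifies `P_I^g`
with the part of `P_{I'}^{g'}` over `{σ(1) ≤ a}`: the only exponent of `x₁` that moves is the
boundary value `a`, where `x₁^a v₁` starts to divide before the shift and `x₁^{a+1} v₁` after it,
while the `vᵢ` do not involve `x₁`. Under the same map `[cᵢ, dᵢ]` is the preimage of
`[c'ᵢ, d'ᵢ]`, so the partition of `P_{I'}^{g'}` pulls back to a partition of `P_I^g`, and
`dᵢ(1) = a` exactly when `d'ᵢ(1) = a + 1`.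
-/

/-- The set `P_I^g` of the characteristic poset of the monomial ideal
`I = (w₁, v_1, …, v_m)` (identifying monomials with their exponent vectors):
all `σ ≤ g` such that some generator divides `x^σ`. -/
def charPoset {n m : ℕ} (w₁ : Fin n → ℕ) (v : Fin m → Fin n → ℕ)
    (g : Fin n → ℕ) : Set (Fin n → ℕ) :=
  {σ | σ ≤ g ∧ (w₁ ≤ σ ∨ ∃ i, v i ≤ σ)}

/-- `ρ_g(d) = #{j : d j = g j}`. -/
def rho {n : ℕ} (g d : Fin n → ℕ) : ℕ :=
  (Finset.univ.filter fun j => d j = g j).card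

section LiftAt

variable {ι : Type*} [DecidableEq ι] (k : ι) (a : ℕ)

def liftAt (σ : ι → ℕ) : ι → ℕ :=
  if σ k = a then σ + Pi.single k 1 else σ

def lowerEndpointAt (c : ι → ℕ) : ι → ℕ :=
  if c k ≤ a then c else c - Pi.single k 1

def upperEndpointAt (d : ι → ℕ) : ι → ℕ :=
  if d k < a then d else d - Pi.single k 1

variable {k a}

theorem liftAt_apply (σ : ι → ℕ) (j : ι) :
    liftAt k a σ j = if σ k = a then σ j + (Pi.single k 1 : ι → ℕ) j else σ j := by
  unfold liftAt; split_ifs <;> rfl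

theorem lowerEndpointAt_apply (c : ι → ℕ) (j : ι) :
    lowerEndpointAt k a c j = if c k ≤ a then c j else c j - (Pi.single k 1 : ι → ℕ) j := by
  unfold lowerEndpointAt; split_ifs <;> rfl

theorem upperEndpointAt_apply (d : ι → ℕ) (j : ι) :
    upperEndpointAt k a d j = if d k < a then d j else d j - (Pi.single k 1 : ι → ℕ) j := by
  unfold upperEndpointAt; split_ifs <;> rfl

theorem upperEndpointAt_apply_self_le {d : ι → ℕ} (hd : d k ≤ a + 1) :
    upperEndpointAt k a d k ≤ a := by
  rw [upperEndpointAt_apply, Pi.single_eq_same]; split_ifs <;> omega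

theorem Icc_endpointsAt_eq_inter_preimage_liftAt (ha : 0 < a) {c d : ι → ℕ}
    (hd : d k ≤ a + 1) :
    Set.Icc (lowerEndpointAt k a c) (upperEndpointAt k a d) =
      {σ | σ k ≤ a} ∩ liftAt k a ⁻¹' Set.Icc c d := by
  have hk : ∀ σ : ι → ℕ, σ k ≤ a → ∀ j,
      (lowerEndpointAt k a c j ≤ σ j ∧ σ j ≤ upperEndpointAt k a d j ↔
        c j ≤ liftAt k a σ j ∧ liftAt k a σ j ≤ d j) := by
    intro σ hσ j
    simp only [liftAt_apply, lowerEndpointAt_apply, upperEndpointAt_apply, Pi.single_apply]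
    rcases eq_or_ne j k with rfl | hj
    · simp only [if_true]; split_ifs <;> omega
    · simp only [hj, if_false]; split_ifs <;> simp
  ext σ
  simp only [Set.mem_inter_iff, Set.mem_preimage, Set.mem_Icc, Pi.le_def, ← forall_and]
  refine ⟨fun h => ?_, fun ⟨hσ, h⟩ j => (hk σ hσ j).mpr (h j)⟩
  have hσ : σ k ≤ a := (h k).2.trans (upperEndpointAt_apply_self_le hd)
  exact ⟨hσ, fun j => (hk σ hσ j).mp (h j)⟩

theorem le_add_single_iff_of_apply_le {σ g : ι → ℕ} (h : σ k ≤ g k) :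
    σ ≤ g + Pi.single k 1 ↔ σ ≤ g := by
  refine ⟨fun hle j => ?_, fun hle => hle.trans le_self_add⟩
  rcases eq_or_ne j k with rfl | hj
  · exact h
  · simpa [hj] using hle j

end LiftAt

theorem charPoset_eq_inter_preimage_liftAt {n m : ℕ} {k : Fin n} {a : ℕ} {w g : Fin n → ℕ}
    {v : Fin m → Fin n → ℕ} (hg : g k = a) (hw : w k = a) (hv : ∀ i, v i k ≤ a) :
    charPoset w v g =
      {σ | σ k ≤ a} ∩ liftAt k a ⁻¹' charPoset (w + Pi.single k 1) v (g + Pi.single k 1) := by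
  ext σ
  simp only [charPoset, Set.mem_inter_iff, Set.mem_preimage, Set.mem_ofPred_eq]
  rcases lt_trichotomy (σ k) a with hlt | heq | hgt
  · have hw : ¬ w ≤ σ := fun h => (h k).not_gt (hw ▸ hlt)
    have hw' : ¬ w + Pi.single k 1 ≤ σ := fun h => hw (le_self_add.trans h)
    rw [liftAt, if_neg hlt.ne, le_add_single_iff_of_apply_le (hg ▸ hlt.le)]
    simp [hlt.le, hw, hw']
  · rw [liftAt, if_pos heq, add_le_add_iff_right, add_le_add_iff_right]
    simp only [le_add_single_iff_of_apply_le (heq ▸ hv _), heq.le, true_and]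
  · have hσ : ¬ σ ≤ g := fun h => (h k).not_gt (hg ▸ hgt)
    simp [hσ, hgt.not_ge]

theorem rho_upperEndpointAt {n : ℕ} {k : Fin n} {a : ℕ} (ha : 0 < a) {g d : Fin n → ℕ}
    (hg : g k = a) : rho g (upperEndpointAt k a d) = rho (g + Pi.single k 1) d := by
  refine congrArg Finset.card (Finset.filter_congr fun j _ => ?_)
  simp only [upperEndpointAt_apply, Pi.add_apply, Pi.single_apply]
  rcases eq_or_ne j k with rfl | hj
  · simp only [if_true]; split_ifs <;> omega
  · simp only [hj, if_false]; split_ifs <;> simp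

/-- Transfer of a partition of `P_{I'}^{g'}` to a partition of `P_I^g`, where
`I = (x₁^a v₁, v₂, …, v_m)`, `I' = (x₁^{a+1} v₁, v₂, …, v_m)`, `x^g = lcm` of the
generators of `I` and `g' = g + e₁`: setting `cᵢ = c'ᵢ` if `c'ᵢ(1) ≤ a`,
`c'ᵢ - e₁` if `c'ᵢ(1) = a + 1`, and `dᵢ = d'ᵢ` if `d'ᵢ(1) < a`, `d'ᵢ - e₁` if
`d'ᵢ(1) ≥ a`, the nonempty intervals among the `[cᵢ, dᵢ]` partition `P_I^g`
and `ρ_g(dᵢ) = ρ_{g'}(d'ᵢ)`. -/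
theorem partition_transfer_down (n : ℕ) (hn : 2 ≤ n)
    (m : ℕ) (v₁ : Fin n → ℕ) (v : Fin m → Fin n → ℕ)
    (hv₁ : v₁ ⟨0, by omega⟩ = 0) (hv : ∀ i, v i ⟨0, by omega⟩ = 0)
    (a : ℕ) (ha : 0 < a)
    (e₁ : Fin n → ℕ) (he₁ : e₁ = fun j => if j = (⟨0, by omega⟩ : Fin n) then 1 else 0)
    (g : Fin n → ℕ)
    (hg : ∀ j, g j = max ((a • e₁ + v₁) j) (Finset.univ.sup fun i => v i j))
    (r : ℕ) (c' d' : Fin r → (Fin n → ℕ))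
    (hcd' : ∀ i, c' i ≤ d' i)
    (hcover : (⋃ i, Set.Icc (c' i) (d' i)) = charPoset ((a + 1) • e₁ + v₁) v (g + e₁))
    (hdisj : Pairwise (Function.onFun Disjoint fun i => Set.Icc (c' i) (d' i)))
    (c d : Fin r → (Fin n → ℕ))
    (hc : ∀ i, c i = if c' i ⟨0, by omega⟩ ≤ a then c' i else c' i - e₁)
    (hd : ∀ i, d i = if d' i ⟨0, by omega⟩ < a then d' i else d' i - e₁) :
    (⋃ i, Set.Icc (c i) (d i)) = charPoset (a • e₁ + v₁) v g ∧
    Pairwise (Function.onFun Disjoint fun i => Set.Icc (c i) (d i)) ∧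
    ∀ i, rho g (d i) = rho (g + e₁) (d' i) := by
  set z : Fin n := ⟨0, by omega⟩
  obtain rfl : e₁ = Pi.single z 1 := he₁.trans (funext fun j => (Pi.single_apply z 1 j).symm)
  obtain rfl : c = fun i => lowerEndpointAt z a (c' i) := funext hc
  obtain rfl : d = fun i => upperEndpointAt z a (d' i) := funext hd
  have hgz : g z = a := by simp [hg, hv, hv₁]
  have hP := charPoset_eq_inter_preimage_liftAt (v := v) (w := a • Pi.single z 1 + v₁) hgz
    (by simp [hv₁]) (fun i => by simp [hv i])
  rw [add_smul, one_smul, add_right_comm] at hcover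
  have hd'z : ∀ i, d' i z ≤ a + 1 := fun i => by
    have hmem : d' i ∈ ⋃ i, Set.Icc (c' i) (d' i) :=
      Set.mem_iUnion_of_mem i (Set.right_mem_Icc.mpr (hcd' i))
    rw [hcover] at hmem
    simpa [hgz] using hmem.1 z
  have hIcc := fun i => Icc_endpointsAt_eq_inter_preimage_liftAt (c := c' i) ha (hd'z i)
  refine ⟨?_, fun i j hij => ?_, fun i => rho_upperEndpointAt ha hgz⟩
  · simp_rw [hIcc, ← Set.inter_iUnion, ← Set.preimage_iUnion, hcover, hP]
  · simp only [Function.onFun, hIcc]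
    exact ((hdisj hij).preimage _).mono Set.inter_subset_right Set.inter_subset_right
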